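/- arXiv:1311.4387 — 2 statements merged into one kernel-verified Lean document; each statement's English description precedes it below -/
import Mathlib

section
/- For all integers p ≥ q ≥ 0 and every sequence x : ℤ → ℝ, the q-fold forward difference of the refined sequence satisfies Δ^q(S_p x) = 2^{−q}·S_{p−q}(Δ^q x), i.e. (Δ^q(S_p x))_i = 2^{−q}·(S_{p−q}(Δ^q x))_i for all i ∈ ℤ. (Equivalently, the q-th derived subdivision scheme of S_p is S_p^{[q]} = 2^{−q} S_{p−q}.) -/
/-!
Each of the `p` averaging steps of `S p` commutes with `Δ`, while on the doubling step `S 0`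
one has `Δ (S 1 x) = 2⁻¹ • S 0 (Δ x)`: indeed `S 1 x` is the piecewise linear interpolation of
`x` at half-integers, so its increments are half those of `x`. Hence
`Δ (S (p + 1) x) = 2⁻¹ • S p (Δ x)`, and iterating `q` times gives the theorem.
-/

/-- The Lane–Riesenfeld (B-spline) subdivision operator `S p` on real sequences. -/
noncomputable def S : ℕ → (ℤ → ℝ) → ℤ → ℝ
  | 0, x, i => x (Int.fdiv i 2)
  | p + 1, x, i => (S p x i + S p x (i + 1)) / 2

/-- Forward difference operator. -/
noncomputable def Δ : (ℤ → ℝ) → ℤ → ℝ := fun x i => x (i + 1) - x i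

lemma S_smul (p : ℕ) (c : ℝ) (x : ℤ → ℝ) : S p (c • x) = c • S p x := by
  induction p with
  | zero => rfl
  | succ p ih =>
    funext i
    simp only [S, ih, Pi.smul_apply, smul_eq_mul]
    ring

lemma Δ_smul (c : ℝ) (x : ℤ → ℝ) : Δ (c • x) = c • Δ x := by
  funext i
  simp only [Δ, Pi.smul_apply, smul_eq_mul]
  ring

lemma iterate_Δ_smul (q : ℕ) (c : ℝ) (x : ℤ → ℝ) : Δ^[q] (c • x) = c • Δ^[q] x := by
  induction q generalizing x with
  | zero => rfl
  | succ q ih => rw [Function.iterate_succ_apply, Function.iterate_succ_apply, Δ_smul, ih]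

lemma Δ_S_succ_apply (p : ℕ) (x : ℤ → ℝ) (i : ℤ) :
    Δ (S (p + 1) x) i = (Δ (S p x) i + Δ (S p x) (i + 1)) / 2 := by
  simp only [S, Δ]
  ring

lemma Δ_S_one (x : ℤ → ℝ) : Δ (S 1 x) = (2⁻¹ : ℝ) • S 0 (Δ x) := by
  funext i
  have h : (i + 1 + 1).fdiv 2 = i.fdiv 2 + 1 := by
    rw [Int.fdiv_eq_ediv_of_nonneg _ zero_le_two, Int.fdiv_eq_ediv_of_nonneg _ zero_le_two]
    omega
  simp only [S, Δ, h, Pi.smul_apply, smul_eq_mul]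
  ring

lemma Δ_S_succ (p : ℕ) (x : ℤ → ℝ) : Δ (S (p + 1) x) = (2⁻¹ : ℝ) • S p (Δ x) := by
  induction p with
  | zero => exact Δ_S_one x
  | succ p ih =>
    funext i
    rw [Δ_S_succ_apply, ih]
    simp only [S, Pi.smul_apply, smul_eq_mul]
    ring

lemma iterate_Δ_S_add (p q : ℕ) (x : ℤ → ℝ) :
    Δ^[q] (S (p + q) x) = (2⁻¹ : ℝ) ^ q • S p (Δ^[q] x) := by
  induction q generalizing x with
  | zero => simp
  | succ q ih =>
    rw [← add_assoc, Function.iterate_succ_apply, Δ_S_succ, iterate_Δ_smul, ih,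
      ← Function.iterate_succ_apply, smul_smul, pow_succ']

/-- For all `p ≥ q ≥ 0`, the `q`-fold forward difference of the refined sequence satisfies
`Δ^q (S_p x) = 2^{−q} · S_{p−q}(Δ^q x)`, i.e. the `q`-th derived scheme of `S_p` is
`2^{−q} S_{p−q}`. -/
theorem derived_scheme_of_LaneRiesenfeld (p q : ℕ) (hq : q ≤ p) (x : ℤ → ℝ) (i : ℤ) :
    Δ^[q] (S p x) i = ((2 : ℝ)⁻¹) ^ q * S (p - q) (Δ^[q] x) i := by
  obtain ⟨r, rfl⟩ := Nat.exists_eq_add_of_le' hq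
  rw [Nat.add_sub_cancel, iterate_Δ_S_add]
  rfl
end

section
/- Let P ≥ 1 be an integer, c ∈ ℝ, and let a, b : ℤ → ℝ be finitely supported masks defining subdivision operators S and T on sequences by (Sx)_i = Σ_{k∈ℤ} a_{i−2k} x_k and (Tx)_i = Σ_{k∈ℤ} b_{i−2k} x_k. Assume that both S and T exactly reproduce polynomials of degree < P with the same shift c, i.e. for every polynomial 𝔭 with deg 𝔭 < P and every i ∈ ℤ, (S(𝔭|_ℤ))_i = 𝔭(i/2 + c) = (T(𝔭|_ℤ))_i. Then there exists a constant C such that for every bounded sequence x : ℤ → ℝ, sup_{i∈ℤ} |(Sx)_i − (Tx)_i| ≤ C · sup_{i∈ℤ} |(Δ^P x)_i|. -/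
open Polynomial Finset

lemma Δ_iter_comp_add_right (x : ℤ → ℝ) (P : ℕ) (q j : ℤ) :
    Δ^[P] (fun k => x (k + q)) j = Δ^[P] x (j + q) :=
  fwdDiff_iter_comp_add 1 x q P j

lemma sum_Ico_by_parts_Δ (c y : ℤ → ℝ) (n m : ℤ) :
    ∑ k ∈ Ico n m, c k * y k =
      (∑ k ∈ Ico n m, c k) * y m - ∑ k ∈ Ico n m, (∑ j ∈ Ico n (k + 1), c j) * Δ y k := by
  rcases lt_or_ge m n with hmn | hnm
  · simp [Ico_eq_empty_of_le hmn.le]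
  induction m, hnm using Int.leInduction with
  | base => simp
  | succ m hnm ih =>
    simp only [← sum_Ico_add_eq_sum_Ico_add_one hnm, ih, Δ]
    ring

lemma descPochhammer_eval_add_one_sub {R : Type*} [CommRing R] (j : ℕ) (t : R) :
    (descPochhammer R (j + 1)).eval (t + 1) - (descPochhammer R (j + 1)).eval t =
      (j + 1) * (descPochhammer R j).eval t := by
  nth_rw 1 [descPochhammer_succ_left]
  rw [descPochhammer_succ_right]
  simp only [eval_mul, eval_X, eval_comp, eval_sub, eval_one, eval_natCast, add_sub_cancel_right]
  ring

lemma degree_descPochhammer_lt {P j : ℕ} (hj : j < P) :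
    (descPochhammer ℝ j).degree < (P : WithBot ℕ) := by
  rw [degree_eq_natDegree (monic_descPochhammer ℝ j).ne_zero, descPochhammer_natDegree]
  exact_mod_cast hj

theorem exists_sum_Ico_eq_sum_Ico_mul_Δ_iter (P : ℕ) {n m : ℤ} (c : ℤ → ℝ)
    (hc : ∀ j < P, ∑ k ∈ Ico n m, c k * (descPochhammer ℝ j).eval (k : ℝ) = 0) :
    ∃ e : ℤ → ℝ, ∀ x : ℤ → ℝ, ∑ k ∈ Ico n m, c k * x k = ∑ k ∈ Ico n m, e k * Δ^[P] x k := by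
  induction P generalizing c with
  | zero => exact ⟨c, fun x => rfl⟩
  | succ P ih =>
    set F : ℤ → ℝ := fun k => ∑ j ∈ Ico n (k + 1), c j
    have htotal : ∑ k ∈ Ico n m, c k = 0 := by simpa using hc 0 P.succ_pos
    have hparts : ∀ y : ℤ → ℝ, ∑ k ∈ Ico n m, c k * y k = -∑ k ∈ Ico n m, F k * Δ y k := by
      intro y
      rw [sum_Ico_by_parts_Δ, htotal]
      ring
    have hF : ∀ j < P, ∑ k ∈ Ico n m, F k * (descPochhammer ℝ j).eval (k : ℝ) = 0 := by
      intro j hj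
      have h := hparts fun k => (descPochhammer ℝ (j + 1)).eval (k : ℝ)
      simp only [hc (j + 1) (by omega), Δ, Int.cast_add, Int.cast_one,
        descPochhammer_eval_add_one_sub, mul_left_comm (F _), ← mul_sum, zero_eq_neg] at h
      exact (mul_eq_zero.1 h).resolve_left (by positivity)
    obtain ⟨e, he⟩ := ih F hF
    refine ⟨-e, fun x => ?_⟩
    simp only [hparts, he, Function.iterate_succ_apply, Pi.neg_apply, neg_mul, sum_neg_distrib]

theorem exists_abs_finsum_mul_le_of_moments (P : ℕ) (c : ℤ → ℝ) (hc : c.support.Finite)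
    (hmom : ∀ p : ℝ[X], p.degree < P → ∑ᶠ k : ℤ, c k * p.eval (k : ℝ) = 0) :
    ∃ C : ℝ, ∀ x : ℤ → ℝ, ∀ D : ℝ, (∀ i, |Δ^[P] x i| ≤ D) →
      |∑ᶠ k : ℤ, c k * x k| ≤ C * D := by
  obtain ⟨n, hn⟩ := hc.bddBelow
  obtain ⟨m, hm⟩ := hc.bddAbove
  have hwindow : ∀ y : ℤ → ℝ, ∑ᶠ k, c k * y k = ∑ k ∈ Ico n (m + 1), c k * y k := by
    intro y
    refine finsum_eq_sum_of_support_subset _ fun k hk => ?_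
    have hk' := Function.support_mul_subset_left _ _ hk
    simpa [Int.lt_add_one_iff] using And.intro (hn hk') (hm hk')
  obtain ⟨e, he⟩ := exists_sum_Ico_eq_sum_Ico_mul_Δ_iter P c fun j hj => by
    rw [← hwindow]
    exact hmom _ (degree_descPochhammer_lt hj)
  refine ⟨∑ k ∈ Ico n (m + 1), |e k|, fun x D hD => ?_⟩
  rw [hwindow, he, sum_mul]
  refine (abs_sum_le_sum_abs _ _).trans (sum_le_sum fun k _ => ?_)
  rw [abs_mul]
  exact mul_le_mul_of_nonneg_left (hD k) (abs_nonneg _)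

noncomputable def subdivision (w x : ℤ → ℝ) (i : ℤ) : ℝ := ∑ᶠ k : ℤ, w (i - 2 * k) * x k

lemma finite_support_comp_sub_two_mul {w : ℤ → ℝ} (hw : w.support.Finite) (i : ℤ) :
    (Function.support fun k : ℤ => w (i - 2 * k)).Finite :=
  hw.preimage fun k _ l _ h => by omega

lemma subdivision_sub {a b : ℤ → ℝ} (ha : a.support.Finite) (hb : b.support.Finite)
    (x : ℤ → ℝ) (i : ℤ) : subdivision a x i - subdivision b x i = subdivision (a - b) x i := by
  unfold subdivision
  rw [← finsum_sub_distrib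
    ((finite_support_comp_sub_two_mul ha i).subset (Function.support_mul_subset_left _ _))
    ((finite_support_comp_sub_two_mul hb i).subset (Function.support_mul_subset_left _ _))]
  simp only [Pi.sub_apply, sub_mul]

lemma subdivision_eq_emod (w x : ℤ → ℝ) (i : ℤ) :
    subdivision w x i = subdivision w (fun k => x (k + i / 2)) (i % 2) := by
  unfold subdivision
  rw [← finsum_comp_equiv (Equiv.addRight (i / 2))]
  simp only [Equiv.coe_addRight, Int.emod_def]
  congr! 4
  ring

theorem mask_difference_bound_general (P : ℕ) (c : ℝ) (a b : ℤ → ℝ)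
    (ha : (Function.support a).Finite) (hb : (Function.support b).Finite)
    (hrepa : ∀ 𝔭 : Polynomial ℝ, 𝔭.degree < (P : WithBot ℕ) → ∀ i : ℤ,
      (∑ᶠ k : ℤ, a (i - 2 * k) * 𝔭.eval (k : ℝ)) = 𝔭.eval ((i : ℝ) / 2 + c))
    (hrepb : ∀ 𝔭 : Polynomial ℝ, 𝔭.degree < (P : WithBot ℕ) → ∀ i : ℤ,
      (∑ᶠ k : ℤ, b (i - 2 * k) * 𝔭.eval (k : ℝ)) = 𝔭.eval ((i : ℝ) / 2 + c)) :
    ∃ C : ℝ, ∀ x : ℤ → ℝ, (∃ M : ℝ, ∀ i : ℤ, |x i| ≤ M) →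
      ∀ D : ℝ, (∀ i : ℤ, |Δ^[P] x i| ≤ D) →
      ∀ i : ℤ, |(∑ᶠ k : ℤ, a (i - 2 * k) * x k) - ∑ᶠ k : ℤ, b (i - 2 * k) * x k| ≤ C * D := by
  have hmom (r : ℤ) (p : ℝ[X]) (hp : p.degree < P) :
      subdivision (a - b) (fun k => p.eval (k : ℝ)) r = 0 := by
    rw [← subdivision_sub ha hb]
    exact sub_eq_zero.2 ((hrepa p hp r).trans (hrepb p hp r).symm)
  choose C hC using fun r : ℤ => exists_abs_finsum_mul_le_of_moments P _
    (finite_support_comp_sub_two_mul ((ha.union hb).subset (Function.support_sub a b)) r)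
    (hmom r)
  refine ⟨max (C 0) (C 1), fun x _ D hD i => ?_⟩
  have hD0 : 0 ≤ D := (abs_nonneg _).trans (hD 0)
  change |subdivision a x i - subdivision b x i| ≤ _
  rw [subdivision_sub ha hb, subdivision_eq_emod]
  refine (hC _ _ D fun j => ?_).trans ?_
  · rw [Δ_iter_comp_add_right]
    exact hD _
  · rcases Int.emod_two_eq_zero_or_one i with h | h <;> rw [h] <;> gcongr
    exacts [le_max_left _ _, le_max_right _ _]

/-- If two subdivision operators `S`, `T` with finitely supported masks `a`, `b` both exactly
reproduce polynomials of degree `< P` with the same shift `c`, then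
`sup_i |(Sx)_i − (Tx)_i| ≤ C · sup_i |(Δ^P x)_i|` for all bounded sequences `x`. -/
theorem mask_difference_bound (P : ℕ) (hP : 1 ≤ P) (c : ℝ) (a b : ℤ → ℝ)
    (ha : (Function.support a).Finite) (hb : (Function.support b).Finite)
    (hrepa : ∀ 𝔭 : Polynomial ℝ, 𝔭.degree < (P : WithBot ℕ) → ∀ i : ℤ,
      (∑ᶠ k : ℤ, a (i - 2 * k) * 𝔭.eval (k : ℝ)) = 𝔭.eval ((i : ℝ) / 2 + c))
    (hrepb : ∀ 𝔭 : Polynomial ℝ, 𝔭.degree < (P : WithBot ℕ) → ∀ i : ℤ,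
      (∑ᶠ k : ℤ, b (i - 2 * k) * 𝔭.eval (k : ℝ)) = 𝔭.eval ((i : ℝ) / 2 + c)) :
    ∃ C : ℝ, ∀ x : ℤ → ℝ, (∃ M : ℝ, ∀ i : ℤ, |x i| ≤ M) →
      ∀ D : ℝ, (∀ i : ℤ, |Δ^[P] x i| ≤ D) →
      ∀ i : ℤ, |(∑ᶠ k : ℤ, a (i - 2 * k) * x k) - ∑ᶠ k : ℤ, b (i - 2 * k) * x k| ≤ C * D :=
  mask_difference_bound_general P c a b ha hb hrepa hrepb
end
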